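/- Let κ = θ⁺ = 2^θ and let (d_δ : δ ∈ E) with E = S^{κ⁺}_κ be a weak diamond sequence for fixed increasing continuous cofinal maps η_δ : κ → δ. Then the tree T = {f ∈ 2^{<κ⁺} : for every δ ∈ E ∩ acc⁺(dom f), the set {i < κ : d_δ(i) = f(η_δ(i))} is non-stationary in κ} is κ-fan closed. -/

import Mathlib

open Cardinal Set

def IsClubIn (C : Set Ordinal.{0}) (δ : Ordinal.{0}) : Prop :=
  C ⊆ Set.Iio δ ∧ (∀ α < δ, ∃ β ∈ C, α ≤ β) ∧
    (∀ α < δ, α ≠ 0 → sSup (C ∩ Set.Iio α) = α → α ∈ C)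

def IsStationaryIn (S : Set Ordinal.{0}) (δ : Ordinal.{0}) : Prop :=
  ∀ C : Set Ordinal.{0}, IsClubIn C δ → (S ∩ C).Nonempty

/-- Nodes of `2^{<κ⁺}` are coded as pairs `(α, f)` with `α < κ⁺` and `f : κ⁺ → 2`
vanishing at and above `α`.  `WDTree` is the tree
`T = {f ∈ 2^{<κ⁺} : for every δ ∈ S^{κ⁺}_κ ∩ acc⁺(dom f), the set
{i < κ : d_δ i = f (η_δ i)} is non-stationary in κ}`. -/
def WDTree (κ : Cardinal.{0}) (η : Ordinal.{0} → Ordinal.{0} → Ordinal.{0})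
    (d : Ordinal.{0} → Ordinal.{0} → Bool) : Set (Ordinal.{0} × (Ordinal.{0} → Bool)) :=
  {p | p.1 < (Order.succ κ).ord ∧ (∀ β, p.1 ≤ β → p.2 β = false) ∧
    ∀ δ, δ < (Order.succ κ).ord → δ.cof = κ → δ ≤ p.1 →
      ¬ IsStationaryIn {i | i < κ.ord ∧ d δ i = p.2 (η δ i)} κ.ord}

/-- The tree order of extension on coded nodes. -/
def ple (p q : Ordinal.{0} × (Ordinal.{0} → Bool)) : Prop :=
  p.1 ≤ q.1 ∧ ∀ β < p.1, p.2 β = q.2 β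

namespace StmtAux11

lemma bddAbove_of_forall_lt {S : Set Ordinal.{0}} {b : Ordinal.{0}} (h : ∀ s ∈ S, s < b) :
    BddAbove S := ⟨b, fun s hs => (h s hs).le⟩

lemma lift_sSup_eq {S : Set Ordinal.{0}} (hne : S.Nonempty) (hbd : BddAbove S) :
    Ordinal.lift.{1} (sSup S) = sSup (Ordinal.lift.{1} '' S) := by
  have hbd' : BddAbove (Ordinal.lift.{1} '' S) := Ordinal.bddAbove_image hbd _
  have h1 : sSup (Ordinal.lift.{1} '' S) ≤ Ordinal.lift.{1} (sSup S) := by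
    apply csSup_le (hne.image _)
    rintro b ⟨s, hs, rfl⟩
    exact Ordinal.lift_le.2 (le_csSup hbd hs)
  obtain ⟨a, ha⟩ := Ordinal.mem_range_lift_of_le h1
  have h2 : sSup S ≤ a := by
    apply csSup_le hne
    intro s hs
    rw [← Ordinal.lift_le.{1}, ha]
    exact le_csSup hbd' ⟨s, hs, rfl⟩
  exact le_antisymm (ha ▸ Ordinal.lift_le.2 h2) h1

lemma sSup_lt_succ_ord {κ : Cardinal.{0}} (hκ : ℵ₀ ≤ κ) {S : Set Ordinal.{0}}
    (h1 : ∀ s ∈ S, s < (Order.succ κ).ord) (h2 : #S ≤ Cardinal.lift.{1} κ) :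
    sSup S < (Order.succ κ).ord := by
  have hpos : (0 : Ordinal) < (Order.succ κ).ord :=
    Ordinal.omega0_pos.trans_le (by
      rw [← Cardinal.ord_aleph0]
      exact Cardinal.ord_le_ord.2 (hκ.trans (Order.le_succ κ)))
  rcases S.eq_empty_or_nonempty with rfl | hne
  · simpa [csSup_empty] using hpos
  have hbd : BddAbove S := bddAbove_of_forall_lt h1
  rw [← Ordinal.lift_lt.{1}, lift_sSup_eq hne hbd, Set.image_eq_range]
  have hord : Ordinal.lift.{1} ((Order.succ κ).ord) = (Order.succ (Cardinal.lift.{1} κ)).ord := by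
    rw [Cardinal.lift_ord, Cardinal.lift_succ]
  rw [hord]
  have hreg : (Order.succ (Cardinal.lift.{1} κ)).IsRegular :=
    Cardinal.isRegular_succ (by simpa using Cardinal.lift_le.{1}.2 hκ)
  apply Ordinal.iSup_lt_ord
  · rw [hreg.cof_eq]
    exact lt_of_le_of_lt h2 (Order.lt_succ _)
  · intro s
    rw [hord.symm]
    exact Ordinal.lift_lt.2 (h1 s.1 s.2)

noncomputable def branch (x : Ordinal.{0} → (Ordinal.{0} → Bool) → (Ordinal.{0} → Bool))
    (δs : Ordinal.{0} → Ordinal.{0}) (e : Ordinal.{0} → Bool) (i : Ordinal.{0}) : Bool :=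
  if x (i + 1) (Function.update
      (fun ν => if h : ν < i then branch x δs e ν else false) i true) (δs i) = e i
  then false else true
termination_by i
decreasing_by all_goals exact h

lemma branch_spec {κ : Cardinal.{0}} (hκ : ℵ₀ ≤ κ)
    (x : Ordinal.{0} → (Ordinal.{0} → Bool) → (Ordinal.{0} → Bool))
    (δs : Ordinal.{0} → Ordinal.{0}) (e : Ordinal.{0} → Bool)
    (hdep : ∀ ξ < κ.ord, ∀ f g : Ordinal.{0} → Bool, (∀ ν < ξ, f ν = g ν) → x ξ f = x ξ g)
    (hsplit : ∀ ξ : Ordinal.{0}, ξ + 1 < κ.ord → ∀ f : Ordinal.{0} → Bool,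
      x (ξ + 1) (Function.update f ξ false) (δs ξ) ≠
        x (ξ + 1) (Function.update f ξ true) (δs ξ))
    {i : Ordinal.{0}} (hi : i < κ.ord) :
    x (i + 1) (branch x δs e) (δs i) ≠ e i := by
  have hi1 : i + 1 < κ.ord := by
    rw [Ordinal.add_one_eq_succ]
    exact (Cardinal.isSuccLimit_ord hκ).succ_lt hi
  set f := branch x δs e with hf
  set g : Ordinal.{0} → Bool := fun ν => if h : ν < i then f ν else false with hg
  have hfeq : f i = if x (i + 1) (Function.update g i true) (δs i) = e i then false else true := by
    rw [hf]; rw [branch]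
  have key : ∀ b : Bool, f i = b → x (i + 1) f = x (i + 1) (Function.update g i b) := by
    intro b hb
    apply hdep (i + 1) hi1
    intro ν hν
    rw [Ordinal.add_one_eq_succ, Order.lt_succ_iff] at hν
    rcases lt_or_eq_of_le hν with hν' | rfl
    · rw [Function.update_of_ne hν'.ne, hg]
      simp [hν']
    · rw [Function.update_self, hb]
  by_cases hcond : x (i + 1) (Function.update g i true) (δs i) = e i
  · have hb : f i = false := by rw [hfeq, if_pos hcond]
    rw [key false hb]
    intro hcontra
    exact hsplit i hi1 g (hcontra.trans hcond.symm)
  · have hb : f i = true := by rw [hfeq, if_neg hcond]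
    rw [key true hb]
    exact hcond

lemma lift_cof_le_of_unattained {S : Set Ordinal.{0}} (hne : S.Nonempty)
    (hbd : BddAbove S) (h : ∀ s ∈ S, s < sSup S) :
    Cardinal.lift.{1} (sSup S).cof ≤ #S := by
  have key : Ordinal.lift.{1} (sSup S) = ⨆ s : S, Ordinal.lift.{1} s.1 := by
    rw [lift_sSup_eq hne hbd, Set.image_eq_range]; rfl
  rw [Ordinal.lift_cof, key]
  exact Ordinal.cof_iSup_le fun s => key ▸ Ordinal.lift_lt.2 (h s.1 s.2)

theorem part1 (θ κ : Cardinal.{0}) (hθ : ℵ₀ ≤ θ)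
    (hsucc : κ = Order.succ θ)
    (η : Ordinal.{0} → Ordinal.{0} → Ordinal.{0})
    (hη : ∀ δ, δ < (Order.succ κ).ord → δ.cof = κ →
      StrictMonoOn (η δ) (Set.Iio κ.ord) ∧
      (∀ i < κ.ord, Order.IsSuccLimit i → η δ i = sSup (η δ '' Set.Iio i)) ∧
      (∀ i < κ.ord, η δ i < δ) ∧ (∀ β < δ, ∃ i < κ.ord, β ≤ η δ i))
    (d : Ordinal.{0} → Ordinal.{0} → Bool) :
    (∀ c : Set (Ordinal.{0} × (Ordinal.{0} → Bool)), c ⊆ WDTree κ η d → c.Nonempty →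
      IsChain ple c → #c < Cardinal.lift.{1} κ →
      ∃ ub ∈ WDTree κ η d, ∀ p ∈ c, ple p ub) := by
  classical
  have hκ : ℵ₀ ≤ κ := hθ.trans (hsucc ▸ (Order.le_succ θ))
  intro c hc hne hchain hcard
  set S : Set Ordinal.{0} := Prod.fst '' c with hS
  have hSne : S.Nonempty := hne.image _
  have hSlt : ∀ s ∈ S, s < (Order.succ κ).ord := by
    rintro s ⟨p, hp, rfl⟩; exact (hc hp).1
  have hSbd : BddAbove S := bddAbove_of_forall_lt hSlt
  set α : Ordinal.{0} := sSup S with hα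
  have hαlt : α < (Order.succ κ).ord :=
    sSup_lt_succ_ord hκ hSlt (le_trans mk_image_le hcard.le)
  have hle : ∀ p ∈ c, p.1 ≤ α := fun p hp => le_csSup hSbd ⟨p, hp, rfl⟩
  -- the union function
  set u : Ordinal.{0} → Bool :=
    fun β => if h : ∃ p, p ∈ c ∧ β < p.1 then h.choose.2 β else false with hu
  have hagree : ∀ p ∈ c, ∀ β < p.1, p.2 β = u β := by
    intro p hp β hβ
    have hex : ∃ q, q ∈ c ∧ β < q.1 := ⟨p, hp, hβ⟩
    obtain ⟨hq, hβq⟩ := hex.choose_spec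
    have : p.2 β = hex.choose.2 β := by
      rcases eq_or_ne p hex.choose with rfl | hpq
      · rfl
      · rcases hchain hp hq hpq with h' | h'
        · exact h'.2 β hβ
        · exact (h'.2 β hβq).symm
    rw [hu]; simp only [dif_pos hex]; exact this
  refine ⟨(α, u), ⟨hαlt, ?_, ?_⟩, ?_⟩
  · -- vanishing above α
    intro β hβ
    rw [hu]
    have : ¬∃ p, p ∈ c ∧ β < p.1 := by
      rintro ⟨p, hp, hβp⟩
      exact absurd ((hle p hp).trans hβ) (not_le.2 hβp)
    simp only [dif_neg this]
  · -- tree condition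
    intro δ hδ1 hδ2 hδ3
    by_cases hex : ∃ p, p ∈ c ∧ δ ≤ p.1
    · obtain ⟨p, hp, hδp⟩ := hex
      have hset : {i | i < κ.ord ∧ d δ i = u (η δ i)} =
          {i | i < κ.ord ∧ d δ i = p.2 (η δ i)} := by
        ext i
        have : ∀ hi : i < κ.ord, p.2 (η δ i) = u (η δ i) := fun hi =>
          hagree p hp _ (lt_of_lt_of_le ((hη δ hδ1 hδ2).2.2.1 i hi) hδp)
        constructor
        · rintro ⟨hi, hd⟩; exact ⟨hi, hd.trans (this hi).symm⟩
        · rintro ⟨hi, hd⟩; exact ⟨hi, hd.trans (this hi)⟩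
      rw [hset]
      exact (hc hp).2.2 δ hδ1 hδ2 hδp
    · exfalso
      push_neg at hex
      have hδα : δ = α := le_antisymm hδ3 (csSup_le hSne (by
        rintro s ⟨p, hp, rfl⟩; exact (hex p hp).le))
      have hunatt : ∀ s ∈ S, s < sSup S := by
        rintro s ⟨p, hp, rfl⟩
        exact lt_of_lt_of_le (hex p hp) (hδα ▸ le_rfl)
      have := lift_cof_le_of_unattained hSne hSbd hunatt
      rw [← hα, ← hδα, hδ2] at this
      exact absurd (lt_of_le_of_lt (this.trans mk_image_le) hcard) (lt_irrefl _)
  · -- upper bound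
    intro p hp
    exact ⟨hle p hp, fun β hβ => hagree p hp β hβ⟩


theorem part2 (θ κ : Cardinal.{0}) (hθ : ℵ₀ ≤ θ)
    (hsucc : κ = Order.succ θ)
    (η : Ordinal.{0} → Ordinal.{0} → Ordinal.{0})
    (hη : ∀ δ, δ < (Order.succ κ).ord → δ.cof = κ →
      StrictMonoOn (η δ) (Set.Iio κ.ord) ∧
      (∀ i < κ.ord, Order.IsSuccLimit i → η δ i = sSup (η δ '' Set.Iio i)) ∧
      (∀ i < κ.ord, η δ i < δ) ∧ (∀ β < δ, ∃ i < κ.ord, β ≤ η δ i))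
    (d : Ordinal.{0} → Ordinal.{0} → Bool) :
    (∀ (δs : Ordinal.{0} → Ordinal.{0})
        (x : Ordinal.{0} → (Ordinal.{0} → Bool) → (Ordinal.{0} → Bool)),
      StrictMonoOn δs (Set.Iio κ.ord) →
      (∀ ξ < κ.ord, Order.IsSuccLimit ξ → δs ξ = sSup (δs '' Set.Iio ξ)) →
      (∀ ξ < κ.ord, ∀ f g : Ordinal.{0} → Bool, (∀ ν < ξ, f ν = g ν) → x ξ f = x ξ g) →
      (∀ ξ < κ.ord, ∀ f : Ordinal.{0} → Bool, (δs ξ, x ξ f) ∈ WDTree κ η d) →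
      (∀ ν ξ : Ordinal.{0}, ν ≤ ξ → ξ < κ.ord → ∀ f : Ordinal.{0} → Bool,
        ∀ β < δs ν, x ξ f β = x ν f β) →
      (∀ ξ : Ordinal.{0}, ξ + 1 < κ.ord → ∀ f : Ordinal.{0} → Bool,
        x (ξ + 1) (Function.update f ξ false) (δs ξ) ≠
          x (ξ + 1) (Function.update f ξ true) (δs ξ)) →
      ∃ (f : Ordinal.{0} → Bool) (u : Ordinal.{0} → Bool),
        (∀ ξ < κ.ord, ∀ β < δs ξ, u β = x ξ f β) ∧
        (sSup (δs '' Set.Iio κ.ord), u) ∈ WDTree κ η d) := by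
  classical
  have hκ : ℵ₀ ≤ κ := hθ.trans (hsucc ▸ (Order.le_succ θ))
  have hℵκ : ℵ₀ < κ := hsucc ▸ (hθ.trans_lt (Order.lt_succ θ))
  have hκreg : κ.ord.cof = κ := by rw [hsucc]; exact (Cardinal.isRegular_succ hθ).cof_eq
  have hκlim : Order.IsSuccLimit κ.ord := Cardinal.isSuccLimit_ord hκ
  have hκ0 : (0 : Ordinal) < κ.ord := hκlim.pos
  have hself : ∀ j : Ordinal.{0}, j < j + 1 := fun j => by
    rw [Ordinal.add_one_eq_succ]; exact Order.lt_succ j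
  have hsucclt : ∀ i : Ordinal.{0}, i < κ.ord → i + 1 < κ.ord := fun i hi => by
    rw [Ordinal.add_one_eq_succ]; exact hκlim.succ_lt hi
  intro δs x hmono hcont hdep hmem hcoh hsplit
  have hδslt : ∀ ξ, ξ < κ.ord → δs ξ < (Order.succ κ).ord :=
    fun ξ hξ => (hmem ξ hξ (fun _ => false)).1
  set T : Set Ordinal.{0} := δs '' Set.Iio κ.ord with hT
  have hTne : T.Nonempty := ⟨δs 0, 0, hκ0, rfl⟩
  have hTlt : ∀ s ∈ T, s < (Order.succ κ).ord := by rintro s ⟨ξ, hξ, rfl⟩; exact hδslt ξ hξ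
  have hTbd : BddAbove T := bddAbove_of_forall_lt hTlt
  set δstar : Ordinal.{0} := sSup T with hδstardef
  have hcardT : #T ≤ Cardinal.lift.{1} κ := by
    calc #T ≤ #(Set.Iio κ.ord) := mk_image_le
    _ = Cardinal.lift.{1} (κ.ord).card := Ordinal.mk_Iio_ordinal κ.ord
    _ = Cardinal.lift.{1} κ := by rw [Cardinal.card_ord]
  have hδstarlt : δstar < (Order.succ κ).ord := sSup_lt_succ_ord hκ hTlt hcardT
  have hlt_star : ∀ ξ, ξ < κ.ord → δs ξ < δstar := by
    intro ξ hξ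
    have h1 : δs ξ < δs (ξ + 1) := hmono hξ (hsucclt ξ hξ) (hself ξ)
    exact lt_of_lt_of_le h1 (le_csSup hTbd ⟨ξ + 1, hsucclt ξ hξ, rfl⟩)
  have hexists_ge : ∀ β, β < δstar → ∃ ξ, ξ < κ.ord ∧ β < δs ξ := by
    intro β hβ
    obtain ⟨s, hs, hβs⟩ := exists_lt_of_lt_csSup hTne hβ
    obtain ⟨ξ, hξ, rfl⟩ := hs
    exact ⟨ξ, hξ, hβs⟩
  set f : Ordinal.{0} → Bool := branch x δs (d δstar) with hf
  set u : Ordinal.{0} → Bool :=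
    fun β => if h : ∃ ξ, ξ < κ.ord ∧ β < δs ξ then x h.choose f β else false with hu
  have huval : ∀ ξ, ξ < κ.ord → ∀ β, β < δs ξ → u β = x ξ f β := by
    intro ξ hξ β hβ
    have hex : ∃ ζ, ζ < κ.ord ∧ β < δs ζ := ⟨ξ, hξ, hβ⟩
    obtain ⟨hζ, hβζ⟩ := hex.choose_spec
    have hval : x hex.choose f β = x ξ f β := by
      rcases le_total hex.choose ξ with h' | h'
      · exact (hcoh hex.choose ξ h' hξ f β hβζ).symm
      · exact hcoh ξ hex.choose h' hζ f β hβ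
    rw [hu]; simp only [dif_pos hex]; exact hval
  refine ⟨f, u, huval, hδstarlt, ?_, ?_⟩
  · -- vanishing at and above δstar
    intro β hβ
    rw [hu]
    have hnex : ¬∃ ξ, ξ < κ.ord ∧ β < δs ξ := by
      rintro ⟨ξ, hξ, hβξ⟩
      exact absurd (le_trans (le_csSup hTbd ⟨ξ, hξ, rfl⟩) hβ) (not_le.2 hβξ)
    simp only [dif_neg hnex]
  · -- tree condition
    dsimp only
    intro δ hδ1 hδ2 hδ3
    rcases lt_or_eq_of_le hδ3 with hδlt | rfl
    · -- δ < δstar : use a node of the fan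
      obtain ⟨ξ, hξ, hδξ⟩ := hexists_ge δ hδlt
      have hset : {i | i < κ.ord ∧ d δ i = u (η δ i)} =
          {i | i < κ.ord ∧ d δ i = x ξ f (η δ i)} := by
        ext i
        have hval : ∀ hi : i < κ.ord, u (η δ i) = x ξ f (η δ i) := fun hi =>
          huval ξ hξ _ (lt_of_lt_of_le ((hη δ hδ1 hδ2).2.2.1 i hi) hδξ.le)
        constructor
        · rintro ⟨hi, hd⟩; exact ⟨hi, hd.trans (hval hi)⟩
        · rintro ⟨hi, hd⟩; exact ⟨hi, hd.trans (hval hi).symm⟩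
      rw [hset]
      exact (hmem ξ hξ f).2.2 δ hδ1 hδ2 hδξ.le
    · -- δ = δstar : diagonalisation via the weak-diamond guess
      obtain ⟨hm, hcont', hlt', hcf'⟩ := hη δstar hδ1 hδ2
      -- interleaving step
      have claim : ∀ j, j < κ.ord → ∃ j', j' < κ.ord ∧ j < j' ∧
          η δstar j ≤ δs j' ∧ δs j ≤ η δstar j' := by
        intro j hj
        obtain ⟨ξ, hξ, hηj⟩ := hexists_ge (η δstar j) (hlt' j hj)
        obtain ⟨i, hi, hδj⟩ := hcf' (δs j) (hlt_star j hj)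
        refine ⟨max (max (j + 1) ξ) i, ?_, ?_, ?_, ?_⟩
        · exact max_lt (max_lt (hsucclt j hj) hξ) hi
        · exact lt_of_lt_of_le (hself j) ((le_max_left _ _).trans (le_max_left _ _))
        · exact hηj.le.trans (hmono.monotoneOn hξ (max_lt (max_lt (hsucclt j hj) hξ) hi)
            ((le_max_right _ _).trans (le_max_left _ _)))
        · exact hδj.trans (hm.monotoneOn hi (max_lt (max_lt (hsucclt j hj) hξ) hi)
            (le_max_right _ _))
      choose F hF1 hF2 hF3 hF4 using claim
      set C : Set Ordinal.{0} := {i | i < κ.ord ∧ η δstar i = δs i} with hC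
      have hclub : IsClubIn C κ.ord := by
        refine ⟨fun i hi => hi.1, ?_, ?_⟩
        · -- unbounded
          intro α hα
          set g : ℕ → {o : Ordinal.{0} // o < κ.ord} :=
            fun n => Nat.rec ⟨α, hα⟩ (fun _ p => ⟨F p.1 p.2, hF1 p.1 p.2⟩) n with hg
          have hgsucc : ∀ n, (g (n + 1)).1 = F (g n).1 (g n).2 := fun n => rfl
          have hglt : ∀ n, (g n).1 < (g (n + 1)).1 := fun n => hF2 _ _
          set i : Ordinal.{0} := ⨆ n, (g n).1 with hidef
          have hile : ∀ n, (g n).1 ≤ i := fun n => Ordinal.le_iSup _ n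
          have higt : ∀ n, (g n).1 < i := fun n => lt_of_lt_of_le (hglt n) (hile (n + 1))
          have hilt : i < κ.ord := by
            apply Ordinal.iSup_lt_ord _ (fun n => (g n).2)
            rw [Cardinal.mk_nat, hκreg]
            exact hℵκ
          have hlim : Order.IsSuccLimit i := by
            refine Ordinal.isSuccLimit_iff.2 ⟨pos_iff_ne_zero.1 (lt_of_le_of_lt (zero_le (a := (g 0).1)) (higt 0)), Order.isSuccPrelimit_iff_succ_lt.2 ?_⟩
            intro a ha
            obtain ⟨n, han⟩ := Ordinal.lt_iSup_iff.1 ha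
            exact lt_of_le_of_lt (Order.succ_le_of_lt han) (higt n)
          have hbd2 : BddAbove (δs '' Iio i) :=
            bddAbove_of_forall_lt (by rintro s ⟨j, hj, rfl⟩; exact hδslt j (hj.trans hilt))
          have hbd1 : BddAbove (η δstar '' Iio i) :=
            bddAbove_of_forall_lt (by
              rintro s ⟨j, hj, rfl⟩; exact hlt' j (hj.trans hilt))
          have hieq : η δstar i = δs i := by
            rw [hcont' i hilt hlim, hcont i hilt hlim]
            apply le_antisymm
            · refine csSup_le ⟨η δstar (g 0).1, ⟨(g 0).1, higt 0, rfl⟩⟩ ?_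
              rintro s ⟨j, hj, rfl⟩
              obtain ⟨n, hn⟩ := Ordinal.lt_iSup_iff.1 hj
              have h1 : η δstar j ≤ η δstar (g n).1 :=
                hm.monotoneOn (lt_trans hj hilt) (g n).2 hn.le
              have h2 : η δstar (g n).1 ≤ δs (g (n + 1)).1 := hF3 _ _
              exact le_trans (h1.trans h2) (le_csSup hbd2 ⟨(g (n + 1)).1, higt (n + 1), rfl⟩)
            · refine csSup_le ⟨δs (g 0).1, ⟨(g 0).1, higt 0, rfl⟩⟩ ?_
              rintro s ⟨j, hj, rfl⟩
              obtain ⟨n, hn⟩ := Ordinal.lt_iSup_iff.1 hj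
              have h1 : δs j ≤ δs (g n).1 :=
                hmono.monotoneOn (lt_trans hj hilt) (g n).2 hn.le
              have h2 : δs (g n).1 ≤ η δstar (g (n + 1)).1 := hF4 _ _
              exact le_trans (h1.trans h2) (le_csSup hbd1 ⟨(g (n + 1)).1, higt (n + 1), rfl⟩)
          exact ⟨i, ⟨hilt, hieq⟩, (hile 0)⟩
        · -- closed
          intro α hα hne0 hsup
          have hDne : (C ∩ Iio α).Nonempty := by
            by_contra h
            rw [not_nonempty_iff_eq_empty] at h
            rw [h, csSup_empty] at hsup
            exact hne0 hsup.symm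
          have hcof : ∀ j, j < α → ∃ b ∈ C ∩ Iio α, j < b := by
            intro j hj
            exact exists_lt_of_lt_csSup hDne (by rw [hsup]; exact hj)
          have hlim : Order.IsSuccLimit α := by
            refine Ordinal.isSuccLimit_iff.2 ⟨hne0, Order.isSuccPrelimit_iff_succ_lt.2 fun a ha => ?_⟩
            obtain ⟨b, hbD, hab⟩ := hcof a ha
            exact lt_of_le_of_lt (Order.succ_le_of_lt hab) hbD.2
          obtain ⟨b0, hb0⟩ := hDne
          have hbd2 : BddAbove (δs '' Iio α) :=
            bddAbove_of_forall_lt (by rintro s ⟨j, hj, rfl⟩; exact hδslt j (hj.trans hα))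
          have hbd1 : BddAbove (η δstar '' Iio α) :=
            bddAbove_of_forall_lt (by rintro s ⟨j, hj, rfl⟩; exact hlt' j (hj.trans hα))
          have hieq : η δstar α = δs α := by
            rw [hcont' α hα hlim, hcont α hα hlim]
            apply le_antisymm
            · refine csSup_le ⟨η δstar b0, ⟨b0, hb0.2, rfl⟩⟩ ?_
              rintro s ⟨j, hj, rfl⟩
              obtain ⟨b, ⟨⟨hbκ, hbeq⟩, hbα⟩, hjb⟩ := hcof j hj
              have h1 : η δstar j ≤ η δstar b := hm.monotoneOn (lt_trans hj hα) hbκ hjb.le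
              rw [hbeq] at h1
              exact h1.trans (le_csSup hbd2 ⟨b, hbα, rfl⟩)
            · refine csSup_le ⟨δs b0, ⟨b0, hb0.2, rfl⟩⟩ ?_
              rintro s ⟨j, hj, rfl⟩
              obtain ⟨b, ⟨⟨hbκ, hbeq⟩, hbα⟩, hjb⟩ := hcof j hj
              have h1 : δs j ≤ δs b := hmono.monotoneOn (lt_trans hj hα) hbκ hjb.le
              rw [← hbeq] at h1
              exact h1.trans (le_csSup hbd1 ⟨b, hbα, rfl⟩)
          exact ⟨hα, hieq⟩
      -- use the club to contradict stationarity
      intro hstat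
      obtain ⟨i, hiS, hiC⟩ := hstat C hclub
      obtain ⟨hi, hbad⟩ := hiS
      have h1 : u (η δstar i) = u (δs i) := by rw [hiC.2]
      have h2 : u (δs i) = x (i + 1) f (δs i) :=
        huval (i + 1) (hsucclt i hi) (δs i) (hmono hi (hsucclt i hi) (hself i))
      exact branch_spec hκ x δs (d δstar) hdep hsplit hi (by rw [← h2, ← h1]; exact hbad.symm)


end StmtAux11

/-- Let `κ = θ⁺ = 2^θ` and let `(d_δ : δ ∈ E)`, `E = S^{κ⁺}_κ`, be a weak diamond
sequence for fixed increasing continuous cofinal maps `η_δ : κ → δ`.  Then the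
tree `WDTree κ η d` is `κ`-fan closed (in particular it is `κ`-closed, and every
`κ`-fan has a cofinal branch whose union lies in the tree). -/
theorem stmt_11 (θ κ : Cardinal.{0}) (hθ : ℵ₀ ≤ θ)
    (hsucc : κ = Order.succ θ) (hpow : κ = 2 ^ θ)
    (η : Ordinal.{0} → Ordinal.{0} → Ordinal.{0})
    (hη : ∀ δ, δ < (Order.succ κ).ord → δ.cof = κ →
      StrictMonoOn (η δ) (Set.Iio κ.ord) ∧
      (∀ i < κ.ord, Order.IsSuccLimit i → η δ i = sSup (η δ '' Set.Iio i)) ∧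
      (∀ i < κ.ord, η δ i < δ) ∧ (∀ β < δ, ∃ i < κ.ord, β ≤ η δ i))
    (d : Ordinal.{0} → Ordinal.{0} → Bool)
    (hWD : ∀ h : Ordinal.{0} → Bool,
      IsStationaryIn {δ | δ < (Order.succ κ).ord ∧ δ.cof = κ ∧
          IsStationaryIn {i | i < κ.ord ∧ d δ i = h (η δ i)} κ.ord}
        (Order.succ κ).ord) :
    -- κ-closed
    (∀ c : Set (Ordinal.{0} × (Ordinal.{0} → Bool)), c ⊆ WDTree κ η d → c.Nonempty →
      IsChain ple c → #c < Cardinal.lift.{1} κ →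
      ∃ ub ∈ WDTree κ η d, ∀ p ∈ c, ple p ub) ∧
    -- every κ-fan has a cofinal branch whose union is in the tree
    (∀ (δs : Ordinal.{0} → Ordinal.{0})
        (x : Ordinal.{0} → (Ordinal.{0} → Bool) → (Ordinal.{0} → Bool)),
      StrictMonoOn δs (Set.Iio κ.ord) →
      (∀ ξ < κ.ord, Order.IsSuccLimit ξ → δs ξ = sSup (δs '' Set.Iio ξ)) →
      (∀ ξ < κ.ord, ∀ f g : Ordinal.{0} → Bool, (∀ ν < ξ, f ν = g ν) → x ξ f = x ξ g) →
      (∀ ξ < κ.ord, ∀ f : Ordinal.{0} → Bool, (δs ξ, x ξ f) ∈ WDTree κ η d) →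
      (∀ ν ξ : Ordinal.{0}, ν ≤ ξ → ξ < κ.ord → ∀ f : Ordinal.{0} → Bool,
        ∀ β < δs ν, x ξ f β = x ν f β) →
      (∀ ξ : Ordinal.{0}, ξ + 1 < κ.ord → ∀ f : Ordinal.{0} → Bool,
        x (ξ + 1) (Function.update f ξ false) (δs ξ) ≠
          x (ξ + 1) (Function.update f ξ true) (δs ξ)) →
      ∃ (f : Ordinal.{0} → Bool) (u : Ordinal.{0} → Bool),
        (∀ ξ < κ.ord, ∀ β < δs ξ, u β = x ξ f β) ∧
        (sSup (δs '' Set.Iio κ.ord), u) ∈ WDTree κ η d) :=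
  ⟨StmtAux11.part1 θ κ hθ hsucc η hη d, StmtAux11.part2 θ κ hθ hsucc η hη d⟩
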